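/- arXiv:1804.01247 — 6 statements merged into one kernel-verified Lean document; each statement's English description precedes it below -/
import Mathlib

section
/- Let G: ℝ → ℝ be odd with G(u) > u for 0 < u < 1 and G(u) < u for u > 1, and suppose G(x) = x only at x = -1, 0, 1. Then for f a probability density on ℝ solving the stationary equation σ f''(v) + ((v - G(m)) f(v))' = 0 with m = ∫ v f(v) dv and σ > 0, the density f must be a Gaussian of variance σ with mean equal to 0, 1, or -1. -/
open Real MeasureTheory Filter Topology

/-- Stationary space-homogeneous densities are Gaussians with variance σ and
mean 0, 1 or -1. -/
theorem stmt0 (σ : ℝ) (hσ : 0 < σ) (G : ℝ → ℝ) (hGsmooth : ContDiff ℝ (⊤ : ℕ∞) G)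
    (hGodd : ∀ u, G (-u) = -G u)
    (hG1 : ∀ u, 0 < u → u < 1 → u < G u)
    (hG2 : ∀ u, 1 < u → G u < u)
    (hGfix : ∀ u, G u = u ↔ u = -1 ∨ u = 0 ∨ u = 1)
    (f : ℝ → ℝ) (hf0 : ∀ v, 0 ≤ f v) (hfi : Integrable f)
    (hfnorm : ∫ v, f v = 1)
    (hfm : Integrable (fun v => v * f v))
    (hfC2 : ContDiff ℝ 2 f)
    (hODE : ∀ v, σ * deriv (deriv f) v
        + deriv (fun w => (w - G (∫ u, u * f u)) * f w) v = 0) :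
    ∃ μ : ℝ, (μ = 0 ∨ μ = 1 ∨ μ = -1) ∧ μ = ∫ u, u * f u ∧
      ∀ v, f v = (Real.sqrt (2 * Real.pi * σ))⁻¹ * Real.exp (-(v - μ)^2 / (2*σ)) := by
  have hσ' : σ ≠ 0 := ne_of_gt hσ
  have hπσ : (0:ℝ) < 2 * Real.pi * σ := by positivity
  set m := ∫ u, u * f u with hm
  set g := G m with hgdef
  -- regularity facts
  have hfd : Differentiable ℝ f := hfC2.differentiable (by norm_num)
  have hfderivC1 : ContDiff ℝ 1 (deriv f) := by
    have hfC2' : ContDiff ℝ (1 + 1) f := by rw [one_add_one_eq_two]; exact hfC2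
    exact (contDiff_succ_iff_deriv.mp hfC2').2.2
  have hfd2 : Differentiable ℝ (deriv f) := hfderivC1.differentiable (by norm_num)
  have hfc : Continuous f := hfC2.continuous
  have hfc1 : Continuous (deriv f) := hfderivC1.continuous
  have hproddiff : Differentiable ℝ (fun w => (w - g) * f w) :=
    (differentiable_id.sub_const g).mul hfd
  -- first integral: σ f' + (v-g) f is constant
  set C := σ * deriv f 0 + ((0:ℝ) - g) * f 0 with hCdef
  have hC : ∀ v, σ * deriv f v + (v - g) * f v = C := by
    intro v
    have hdiff : Differentiable ℝ (fun w => σ * deriv f w + (w - g) * f w) :=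
      (hfd2.const_mul σ).add hproddiff
    have hz : ∀ x, deriv (fun w => σ * deriv f w + (w - g) * f w) x = 0 := by
      intro x
      rw [deriv_fun_add ((hfd2.const_mul σ).differentiableAt) (hproddiff.differentiableAt),
        deriv_const_mul σ (hfd2 x)]
      exact hODE x
    exact is_const_of_deriv_eq_zero hdiff hz v 0
  have hint1 : Integrable (fun s => (s - g) * f s) := by
    have h := hfm.sub (hfi.const_mul g)
    have : (fun s => (s - g) * f s) = fun s => s * f s - g * f s := by
      funext s; ring
    rw [this]; exact h
  -- the constant must vanish
  have hC0 : C = 0 := by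
    by_contra h0
    have hder : ∀ s, deriv f s = C / σ - (s - g) * f s / σ := by
      intro s; have h := hC s; field_simp; linarith
    have hrep : ∀ v, f v = (C / σ) * v + (f 0 - (∫ s in (0:ℝ)..v, (s - g) * f s) / σ) := by
      intro v
      have hFTC : (∫ s in (0:ℝ)..v, deriv f s) = f v - f 0 :=
        intervalIntegral.integral_deriv_eq_sub (fun x _ => (hfd x))
          (hfc1.intervalIntegrable 0 v)
      have h2 : (∫ s in (0:ℝ)..v, deriv f s)
          = (C / σ) * v - (∫ s in (0:ℝ)..v, (s - g) * f s) / σ := by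
        rw [intervalIntegral.integral_congr
          (g := fun s => C / σ - (s - g) * f s / σ) (fun s _ => hder s)]
        have hii : IntervalIntegrable (fun s : ℝ => (s - g) * f s / σ) volume 0 v := by
          apply Continuous.intervalIntegrable
          exact ((continuous_id.sub continuous_const).mul hfc).div_const σ
        rw [intervalIntegral.integral_sub intervalIntegrable_const hii,
          intervalIntegral.integral_const, intervalIntegral.integral_div]
        simp [smul_eq_mul]; ring
      have := hFTC.symm.trans h2
      linarith
    set L := ∫ s in Set.Ioi (0:ℝ), (s - g) * f s with hL
    have hIlim : Tendsto (fun v => ∫ s in (0:ℝ)..v, (s - g) * f s) atTop (𝓝 L) :=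
      intervalIntegral_tendsto_integral_Ioi 0 hint1.integrableOn tendsto_id
    have htail : Tendsto (fun v => f 0 - (∫ s in (0:ℝ)..v, (s - g) * f s) / σ) atTop
        (𝓝 (f 0 - L / σ)) := tendsto_const_nhds.sub (hIlim.div_const σ)
    rcases lt_or_gt_of_ne h0 with hneg | hpos
    · -- C < 0 : f tends to -∞, contradicting nonnegativity
      have hCσ : 0 < -(C / σ) := by
        have := div_neg_of_neg_of_pos hneg hσ
        linarith
      have h1 : Tendsto (fun v : ℝ => (-(C / σ)) * v) atTop atTop :=
        (tendsto_const_mul_atTop_of_pos hCσ).mpr tendsto_id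
      have h1' : Tendsto (fun v : ℝ => (C / σ) * v) atTop atBot := by
        have h := tendsto_neg_atTop_atBot.comp h1
        refine h.congr (fun v => ?_)
        simp [Function.comp]
      have hev : ∀ᶠ v in atTop, (f 0 - (∫ s in (0:ℝ)..v, (s - g) * f s) / σ)
          ≤ f 0 - L / σ + 1 := htail.eventually (eventually_le_nhds (lt_add_one _))
      have h2 : Tendsto f atTop atBot := by
        have h3 := tendsto_atBot_add_right_of_ge' atTop (f 0 - L / σ + 1) h1' hev
        refine h3.congr (fun v => ?_)
        rw [hrep v]
      obtain ⟨v, hv⟩ := (h2.eventually (eventually_lt_atBot (0:ℝ))).exists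
      exact absurd (hf0 v) (not_le.mpr hv)
    · -- C > 0 : f tends to +∞, contradicting integrability
      have h1 : Tendsto (fun v : ℝ => (C / σ) * v) atTop atTop :=
        (tendsto_const_mul_atTop_of_pos (by positivity)).mpr tendsto_id
      have hev : ∀ᶠ v in atTop, (f 0 - L / σ - 1)
          ≤ f 0 - (∫ s in (0:ℝ)..v, (s - g) * f s) / σ :=
        htail.eventually (eventually_ge_nhds (by linarith))
      have h2 : Tendsto f atTop atTop := by
        have h3 := tendsto_atTop_add_right_of_le' atTop (f 0 - L / σ - 1) h1 hev
        refine h3.congr (fun v => ?_)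
        rw [hrep v]
      obtain ⟨a, ha⟩ := eventually_atTop.mp (h2.eventually (eventually_ge_atTop (1:ℝ)))
      have hsub : Set.Ici a ⊆ {x | 1 ≤ ‖f x‖} := by
        intro x hx
        simp only [Set.mem_setOf_eq, Real.norm_eq_abs, abs_of_nonneg (hf0 x)]
        exact ha x hx
      have hfin := hfi.measure_norm_ge_lt_top (by norm_num : (0:ℝ) < 1)
      have hmono := measure_mono hsub (μ := volume)
      rw [Real.volume_Ici] at hmono
      exact absurd (lt_of_le_of_lt hmono hfin) (by simp)
  -- solve the first-order ODE: f is a Gaussian centred at g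
  have hderiv0 : ∀ v, deriv f v = -((v - g) / σ) * f v := by
    intro v
    have h := hC v
    rw [hC0] at h
    field_simp
    linarith
  set K := f g with hKdef
  have hK : ∀ v, f v = K * Real.exp (-(v - g)^2 / (2*σ)) := by
    set u := fun v => f v * Real.exp ((v - g)^2 / (2*σ)) with hu
    have hud : ∀ v, HasDerivAt u 0 v := by
      intro v
      have h1 : HasDerivAt (fun w : ℝ => (w - g)^2 / (2*σ)) ((v - g) / σ) v := by
        have h := (((hasDerivAt_id v).sub_const g).pow 2).div_const (2*σ)
        refine h.congr_deriv ?_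
        field_simp
        simp only [id]
        ring
      have h2 := h1.exp
      have h3 := (hfd v).hasDerivAt.mul h2
      refine h3.congr_deriv ?_
      rw [hderiv0 v]
      ring
    have hconst : ∀ v, u v = u g := fun v =>
      is_const_of_deriv_eq_zero (fun x => (hud x).differentiableAt)
        (fun x => (hud x).deriv) v g
    intro v
    have h := hconst v
    have hgg : u g = K := by simp [hu, hKdef]
    rw [hgg] at h
    have hexp : Real.exp ((v - g)^2 / (2*σ)) ≠ 0 := Real.exp_ne_zero _
    simp only [hu] at h
    have h4 : f v = K * Real.exp (-((v - g)^2 / (2*σ))) := by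
      rw [Real.exp_neg, ← div_eq_mul_inv, eq_div_iff hexp]
      exact h
    rw [h4, neg_div]
  -- value of the normalising constant
  have hgauss : ∫ v, Real.exp (-(v - g)^2 / (2*σ)) = Real.sqrt (2*Real.pi*σ) := by
    have h1 : ∫ v, Real.exp (-(v - g)^2 / (2*σ)) = ∫ x, Real.exp (-x^2 / (2*σ)) :=
      integral_sub_right_eq_self (fun x => Real.exp (-x^2 / (2*σ))) g
    rw [h1]
    have h2 : ∀ x : ℝ, -x^2 / (2*σ) = -((2*σ)⁻¹) * x^2 := by
      intro x; field_simp
    simp_rw [h2]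
    rw [integral_gaussian]
    congr 1
    field_simp
  have hsqrt_pos : 0 < Real.sqrt (2*Real.pi*σ) := Real.sqrt_pos.mpr hπσ
  have h1 : (1:ℝ) = K * Real.sqrt (2*Real.pi*σ) := by
    rw [← hfnorm, integral_congr_ae (Filter.Eventually.of_forall hK), integral_const_mul,
      hgauss]
  have hKval : K = (Real.sqrt (2*Real.pi*σ))⁻¹ :=
    eq_inv_of_mul_eq_one_left h1.symm
  -- the mean equals g
  have hb : (0:ℝ) < (2*σ)⁻¹ := by positivity
  have hexpintegrable : Integrable (fun x : ℝ => Real.exp (-x^2 / (2*σ))) := by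
    have h := integrable_exp_neg_mul_sq hb
    refine h.congr ?_
    filter_upwards with x
    congr 1
    field_simp
  have hodd : ∫ x : ℝ, x * (K * Real.exp (-x^2 / (2*σ))) = 0 := by
    set φ := fun x : ℝ => x * (K * Real.exp (-x^2 / (2*σ))) with hφ
    have h1 : ∫ x : ℝ, φ (-x) = ∫ x : ℝ, φ x := integral_neg_eq_self φ volume
    have h2 : ∀ x : ℝ, φ (-x) = -φ x := by
      intro x
      simp only [hφ, neg_sq]
      ring_nf
    simp_rw [h2, integral_neg] at h1
    linarith
  have hmean : m = g := by
    have e0 : ∀ v, v * f v = (v - g) * f v + g * f v := fun v => by ring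
    have e1 : ∫ v, (v - g) * f v = ∫ x, x * (K * Real.exp (-x^2 / (2*σ))) := by
      have h := integral_sub_right_eq_self (μ := volume)
        (fun x => x * (K * Real.exp (-x^2 / (2*σ)))) g
      rw [← h]
      congr 1
      funext v
      rw [hK v]
    have e2 : ∫ v, g * f v = g := by
      rw [integral_const_mul, hfnorm, mul_one]
    calc m = ∫ v, v * f v := hm
      _ = ∫ v, ((v - g) * f v + g * f v) := by simp_rw [e0]
      _ = (∫ v, (v - g) * f v) + ∫ v, g * f v :=
          integral_add hint1 (hfi.const_mul g)
      _ = 0 + g := by rw [e1, hodd, e2]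
      _ = g := by ring
  -- the mean is a fixed point of G
  have hfix : m = -1 ∨ m = 0 ∨ m = 1 := (hGfix m).mp (by rw [← hgdef, ← hmean])
  refine ⟨m, ?_, hm, ?_⟩
  · tauto
  · intro v
    rw [hK v, hKval, ← hmean]
end

section
/- An integrable positive solution f on ℝ of the first-order ODE (G(μ) - v) f(v) = σ f'(v) + C, where μ = ∫ v f(v) dv, exists only if C = 0, and in that case f(v) = \bar{C} exp((2 G(μ) v - v²)/(2σ)) for some constant \bar{C} > 0. -/
/-!
With `m = G(μ)`, the integrating factor `exp ((v² - 2mv)/(2σ))` turns the ODE into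
`(f · exp (…))' = -(C/σ) exp (…)`. The exponent is nonnegative for `|v| ≥ |2m|`, so if `C ≠ 0`
the positive function `f · exp (…)` would decrease at least linearly as `v → +∞` (if `C > 0`)
or as `v → -∞` (if `C < 0`), and become negative. Hence `C = 0`, the product is the constant
`f 0`, and `f v = f 0 · exp ((2mv - v²)/(2σ))`.
-/

open Real MeasureTheory

lemma exists_neg_of_deriv_le_neg {k : ℝ → ℝ} (hk : Differentiable ℝ k) {c M : ℝ}
    (hc : 0 < c) (hk' : ∀ v, M ≤ v → deriv k v ≤ -c) : ∃ v, k v < 0 := by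
  set b := M + |k M| / c + 1
  have hMb : M ≤ b := by simp only [b]; linarith [div_nonneg (abs_nonneg (k M)) hc.le]
  have hdecay : k b - k M ≤ -c * (b - M) :=
    (convex_Ici M).image_sub_le_mul_sub_of_deriv_le hk.continuous.continuousOn
      hk.differentiableOn (fun v hv => hk' v (by simpa using interior_subset hv))
      M Set.self_mem_Ici b hMb hMb
  refine ⟨b, ?_⟩
  have hcb : c * (b - M) = |k M| + c := by simp only [b]; field_simp; ring
  linarith [le_abs_self (k M)]

lemma exists_neg_of_le_deriv {k : ℝ → ℝ} (hk : Differentiable ℝ k) {c M : ℝ} (hc : 0 < c)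
    (hk' : ∀ v, v ≤ M → c ≤ deriv k v) : ∃ v, k v < 0 := by
  set a := M - |k M| / c - 1
  have haM : a ≤ M := by simp only [a]; linarith [div_nonneg (abs_nonneg (k M)) hc.le]
  have hgrowth : c * (M - a) ≤ k M - k a :=
    (convex_Iic M).mul_sub_le_image_sub_of_le_deriv hk.continuous.continuousOn
      hk.differentiableOn (fun v hv => hk' v (by simpa using interior_subset hv))
      a haM M Set.self_mem_Iic haM
  refine ⟨a, ?_⟩
  have hca : c * (M - a) = |k M| + c := by simp only [a]; field_simp; ring
  linarith [le_abs_self (k M)]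

lemma one_le_exp_of_abs_le_abs {m σ v : ℝ} (hσ : 0 < σ) (hv : |2 * m| ≤ |v|) :
    1 ≤ exp ((v ^ 2 - 2 * m * v) / (2 * σ)) := by
  have hmv : 2 * m * v ≤ v ^ 2 :=
    calc 2 * m * v ≤ |2 * m| * |v| := by rw [← abs_mul]; exact le_abs_self _
      _ ≤ |v| * |v| := by gcongr
      _ = v ^ 2 := by rw [← abs_mul, ← sq, abs_sq]
  exact one_le_exp (div_nonneg (by linarith) (by linarith))

lemma hasDerivAt_mul_exp_of_ode {σ m C : ℝ} (hσ : σ ≠ 0) {f : ℝ → ℝ}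
    (hf : Differentiable ℝ f) (hODE : ∀ v, (m - v) * f v = σ * deriv f v + C) (v : ℝ) :
    HasDerivAt (fun v => f v * exp ((v ^ 2 - 2 * m * v) / (2 * σ)))
      (-(C / σ) * exp ((v ^ 2 - 2 * m * v) / (2 * σ))) v := by
  have hexponent : HasDerivAt (fun v => (v ^ 2 - 2 * m * v) / (2 * σ))
      ((2 * v - 2 * m) / (2 * σ)) v := by
    have := ((hasDerivAt_pow 2 v).sub ((hasDerivAt_id v).const_mul (2 * m))).div_const (2 * σ)
    exact this.congr_deriv (by ring)
  have hf' : deriv f v = ((m - v) * f v - C) / σ := by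
    rw [eq_div_iff hσ]; linarith [hODE v]
  refine ((hf v).hasDerivAt.mul hexponent.exp).congr_deriv ?_
  rw [hf']
  field_simp
  ring

lemma const_eq_zero_of_ode {σ m C : ℝ} (hσ : 0 < σ) {f : ℝ → ℝ} (hfpos : ∀ v, 0 < f v)
    (hf : Differentiable ℝ f) (hODE : ∀ v, (m - v) * f v = σ * deriv f v + C) : C = 0 := by
  set k := fun v => f v * exp ((v ^ 2 - 2 * m * v) / (2 * σ))
  have hk := hasDerivAt_mul_exp_of_ode hσ.ne' hf hODE
  have hkdiff : Differentiable ℝ k := fun v => (hk v).differentiableAt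
  have hkpos : ∀ v, 0 < k v := fun v => mul_pos (hfpos v) (exp_pos _)
  by_contra hC
  obtain ⟨v, hv⟩ : ∃ v, k v < 0 := by
    rcases lt_or_gt_of_ne hC with hneg | hpos
    · have hc : 0 < -(C / σ) := neg_pos.2 (div_neg_of_neg_of_pos hneg hσ)
      refine exists_neg_of_le_deriv hkdiff hc (M := -|2 * m|) fun v hv => ?_
      rw [(hk v).deriv]
      have : |2 * m| ≤ |v| := by
        rw [abs_of_nonpos (hv.trans (neg_nonpos.2 (abs_nonneg _)))]; linarith
      exact le_mul_of_one_le_right hc.le (one_le_exp_of_abs_le_abs hσ this)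
    · have hc : 0 < C / σ := div_pos hpos hσ
      refine exists_neg_of_deriv_le_neg hkdiff hc (M := |2 * m|) fun v hv => ?_
      rw [(hk v).deriv, neg_mul, neg_le_neg_iff]
      exact le_mul_of_one_le_right hc.le (one_le_exp_of_abs_le_abs hσ (hv.trans (le_abs_self v)))
  exact (hkpos v).not_gt hv

lemma eq_mul_exp_of_ode {σ m : ℝ} (hσ : σ ≠ 0) {f : ℝ → ℝ} (hf : Differentiable ℝ f)
    (hODE : ∀ v, (m - v) * f v = σ * deriv f v) (v : ℝ) :
    f v = f 0 * exp ((2 * m * v - v ^ 2) / (2 * σ)) := by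
  have hk := hasDerivAt_mul_exp_of_ode hσ hf (C := 0) (by simpa using hODE)
  have hconst : f v * exp ((v ^ 2 - 2 * m * v) / (2 * σ)) = f 0 := by
    simpa using is_const_of_deriv_eq_zero (fun v => (hk v).differentiableAt)
      (fun v => by simp [(hk v).deriv]) v 0
  calc f v = f v * exp ((v ^ 2 - 2 * m * v) / (2 * σ))
          * exp (-((v ^ 2 - 2 * m * v) / (2 * σ))) := by
        rw [mul_assoc, ← exp_add, add_neg_cancel, exp_zero, mul_one]
    _ = f 0 * exp ((2 * m * v - v ^ 2) / (2 * σ)) := by rw [hconst, ← neg_div, neg_sub]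

theorem stmt1_general (σ C : ℝ) (hσ : 0 < σ) (G : ℝ → ℝ)
    (f : ℝ → ℝ) (hfpos : ∀ v, 0 < f v) (hfdiff : Differentiable ℝ f)
    (hODE : ∀ v, (G (∫ u, u * f u) - v) * f v = σ * deriv f v + C) :
    C = 0 ∧ ∃ Cb : ℝ, 0 < Cb ∧
      ∀ v, f v = Cb * Real.exp ((2 * G (∫ u, u * f u) * v - v^2) / (2*σ)) := by
  have hC := const_eq_zero_of_ode hσ hfpos hfdiff hODE
  subst hC
  exact ⟨rfl, f 0, hfpos 0, eq_mul_exp_of_ode hσ.ne' hfdiff (by simpa using hODE)⟩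

/-- An integrable positive solution of (G(μ)-v)f = σ f' + C exists only if C = 0,
and then f is proportional to exp((2G(μ)v - v²)/(2σ)). -/
theorem stmt1 (σ C : ℝ) (hσ : 0 < σ) (G : ℝ → ℝ)
    (f : ℝ → ℝ) (hfpos : ∀ v, 0 < f v) (hfdiff : Differentiable ℝ f)
    (hfi : Integrable f) (hfm : Integrable (fun v => v * f v))
    (hODE : ∀ v, (G (∫ u, u * f u) - v) * f v = σ * deriv f v + C) :
    C = 0 ∧ ∃ Cb : ℝ, 0 < Cb ∧
      ∀ v, f v = Cb * Real.exp ((2 * G (∫ u, u * f u) * v - v^2) / (2*σ)) :=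
  stmt1_general σ C hσ G f hfpos hfdiff hODE
end

section
/- Let M₂ solve M₂' = 2[G(M₁)M₁ - M₂ + σ] where M₁(t) is a solution of M₁' = G(M₁) - M₁ converging to L ∈ {-1, 0, 1} as t → ∞, and G(L) = L. Then M₂(t) converges to L² + σ as t → ∞; in particular the variance M₂ - M₁² converges to σ. -/
/-!
`M₂` relaxes at rate 2 towards the source `G(M₁) M₁ + σ`, which tends to `L² + σ` because `G` is
continuous at its fixed point `L`. A linear relaxation `y' = k (f - y)` with `k > 0` inherits the
limit of its source: if `f ≤ b` on `[T, ∞)`, then `(y - b) e^{k t}` is nonincreasing there, so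
`y ≤ b + O(e^{-k t})`; the lower bound follows by applying this to `-y`.
-/

open Real Filter Topology Set

section Relaxation

variable {y f : ℝ → ℝ} {k : ℝ}

theorem antitoneOn_sub_mul_exp_of_relax (hk : 0 ≤ k) {T b : ℝ}
    (hy : ∀ t ≥ T, HasDerivAt y (k * (f t - y t)) t) (hf : ∀ t ≥ T, f t ≤ b) :
    AntitoneOn (fun s => (y s - b) * exp (k * s)) (Ici T) := by
  have hderiv : ∀ t ≥ T, HasDerivAt (fun s => (y s - b) * exp (k * s))
      (k * exp (k * t) * (f t - b)) t := fun t ht =>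
    (((hy t ht).sub_const b).mul (((hasDerivAt_id' t).const_mul k).exp)).congr_deriv (by ring)
  refine antitoneOn_of_deriv_nonpos (convex_Ici T)
    (fun t ht => (hderiv t ht).continuousAt.continuousWithinAt) ?_ ?_
  · rw [interior_Ici]
    exact fun t ht => (hderiv t (le_of_lt ht)).differentiableAt.differentiableWithinAt
  · rw [interior_Ici]
    intro t ht
    rw [(hderiv t (le_of_lt ht)).deriv]
    exact mul_nonpos_of_nonneg_of_nonpos (by positivity) (sub_nonpos.2 (hf t (le_of_lt ht)))

theorem eventually_lt_of_relax (hk : 0 < k)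
    (hy : ∀ᶠ t in atTop, HasDerivAt y (k * (f t - y t)) t) {c a : ℝ}
    (hf : Tendsto f atTop (𝓝 c)) (hca : c < a) : ∀ᶠ t in atTop, y t < a := by
  obtain ⟨b, hcb, hba⟩ := exists_between hca
  obtain ⟨T, hT⟩ := eventually_atTop.1 ((hf.eventually (gt_mem_nhds hcb)).and hy)
  have hanti := antitoneOn_sub_mul_exp_of_relax hk.le (fun t ht => (hT t ht).2)
    (fun t ht => (hT t ht).1.le)
  set C := (y T - b) * exp (k * T)
  have hbound : ∀ t ≥ T, y t ≤ b + C * exp (-(k * t)) := by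
    intro t ht
    have hdecay : (y t - b) * exp (k * t) ≤ C := hanti self_mem_Ici ht ht
    have hinv : exp (k * t) * exp (-(k * t)) = 1 := by rw [← exp_add, add_neg_cancel, exp_zero]
    calc y t = b + (y t - b) * exp (k * t) * exp (-(k * t)) := by rw [mul_assoc, hinv]; ring
      _ ≤ b + C * exp (-(k * t)) := by gcongr
  have hlim : Tendsto (fun t => b + C * exp (-(k * t))) atTop (𝓝 b) := by
    simpa using tendsto_const_nhds.add
      ((tendsto_exp_neg_atTop_nhds_zero.comp (tendsto_id.const_mul_atTop hk)).const_mul C)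
  filter_upwards [eventually_ge_atTop T, hlim.eventually (gt_mem_nhds hba)] with t hTt ht
  exact (hbound t hTt).trans_lt ht

theorem tendsto_of_relax (hk : 0 < k)
    (hy : ∀ᶠ t in atTop, HasDerivAt y (k * (f t - y t)) t) {c : ℝ}
    (hf : Tendsto f atTop (𝓝 c)) : Tendsto y atTop (𝓝 c) := by
  have hy_neg : ∀ᶠ t in atTop, HasDerivAt (-y) (k * ((-f) t - (-y) t)) t :=
    hy.mono fun t h => h.neg.congr_deriv (by simp only [Pi.neg_apply]; ring)
  refine tendsto_order.2 ⟨fun a hac => ?_, fun a hca => eventually_lt_of_relax hk hy hf hca⟩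
  filter_upwards [eventually_lt_of_relax hk hy_neg hf.neg (neg_lt_neg hac)] with t ht
  exact neg_lt_neg_iff.1 ht

end Relaxation

theorem stmt3_general (σ : ℝ) (G : ℝ → ℝ) (hGc : Continuous G)
    (L : ℝ) (hGL : G L = L)
    (M1 M2 : ℝ → ℝ)
    (h2 : ∀ t, 0 ≤ t → HasDerivAt M2 (2 * (G (M1 t) * M1 t - M2 t + σ)) t)
    (hconv : Tendsto M1 atTop (𝓝 L)) :
    Tendsto M2 atTop (𝓝 (L^2 + σ)) ∧
    Tendsto (fun t => M2 t - (M1 t)^2) atTop (𝓝 σ) := by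
  have hsource : Tendsto (fun t => G (M1 t) * M1 t + σ) atTop (𝓝 (L^2 + σ)) := by
    have hG : Tendsto (fun t => G (M1 t)) atTop (𝓝 L) := hGL ▸ (hGc.tendsto L).comp hconv
    simpa [sq] using (hG.mul hconv).add_const σ
  have hM2 : Tendsto M2 atTop (𝓝 (L^2 + σ)) := by
    refine tendsto_of_relax two_pos ?_ hsource
    filter_upwards [eventually_ge_atTop 0] with t ht
    exact (h2 t ht).congr_deriv (by ring)
  exact ⟨hM2, by simpa using hM2.sub (hconv.pow 2)⟩

/-- The second moment converges to L² + σ, hence the variance converges to σ. -/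
theorem stmt3 (σ : ℝ) (hσ : 0 < σ) (G : ℝ → ℝ) (hGc : Continuous G)
    (hGb : ∃ Bd : ℝ, ∀ u, |G u| ≤ Bd)
    (hGm1 : G (-1) = -1) (hG0 : G 0 = 0) (hG1 : G 1 = 1)
    (L : ℝ) (hL : L = -1 ∨ L = 0 ∨ L = 1) (hGL : G L = L)
    (M1 M2 : ℝ → ℝ)
    (h1 : ∀ t, 0 ≤ t → HasDerivAt M1 (G (M1 t) - M1 t) t)
    (h2 : ∀ t, 0 ≤ t → HasDerivAt M2 (2 * (G (M1 t) * M1 t - M2 t + σ)) t)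
    (hconv : Tendsto M1 atTop (𝓝 L)) :
    Tendsto M2 atTop (𝓝 (L^2 + σ)) ∧
    Tendsto (fun t => M2 t - (M1 t)^2) atTop (𝓝 σ) :=
  stmt3_general σ G hGc L hGL M1 M2 h2 hconv
end

section
/- Let G: ℝ → ℝ be bounded and continuous, and let V be an antiderivative of -G (V' = -G). Then the functional S(f) = ∫ [f log f + v²/(2σ) f] dv + V(⟨w⟩_f)/σ, defined on probability densities f on ℝ with finite second moment, is bounded from below. -/
open Real MeasureTheory Filter Topology

lemma entropy_lb (a : ℝ) (ha : 0 < a) (f : ℝ → ℝ) (hf0 : ∀ v, 0 ≤ f v)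
    (hfi : Integrable f) (hf1 : (∫ v, f v) = 1) (hf2 : Integrable (fun v => v^2 * f v))
    (hflog : Integrable (fun v => f v * Real.log (f v))) :
    -(a * ∫ v, v^2 * f v) - Real.log (Real.sqrt (π / a)) ≤ ∫ v, f v * Real.log (f v) := by
  set K := Real.log (Real.sqrt (π / a)) with hK
  set ρ : ℝ → ℝ := fun v => Real.exp (-a * v ^ 2) / Real.sqrt (π / a) with hρ
  have hπa : 0 < Real.sqrt (π / a) := Real.sqrt_pos.mpr (div_pos Real.pi_pos ha)
  have hρi : Integrable ρ := (integrable_exp_neg_mul_sq ha).div_const _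
  have hρ1 : (∫ v, ρ v) = 1 := by
    rw [hρ]
    rw [integral_div, integral_gaussian, div_self (ne_of_gt hπa)]
  have hρpos : ∀ v, 0 < ρ v := fun v => div_pos (Real.exp_pos _) hπa
  have hlogρ : ∀ v, Real.log (ρ v) = -a * v ^ 2 - K := by
    intro v
    rw [hρ, hK]
    simp [Real.log_div (Real.exp_ne_zero _) (ne_of_gt hπa), Real.log_exp]
  -- pointwise inequality
  have hpt : ∀ v, f v - ρ v ≤ f v * Real.log (f v) + a * v ^ 2 * f v + K * f v := by
    intro v
    rcases eq_or_lt_of_le (hf0 v) with h | h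
    · simp [← h]
      linarith [(hρpos v).le]
    · have hlog := Real.log_le_sub_one_of_pos (div_pos (hρpos v) h)
      rw [Real.log_div (ne_of_gt (hρpos v)) (ne_of_gt h), hlogρ v] at hlog
      have := mul_le_mul_of_nonneg_left hlog h.le
      have h4 : f v * (ρ v / f v - 1) = ρ v - f v := by field_simp
      rw [h4] at this
      nlinarith
  -- integrate
  have hgi : Integrable (fun v => f v * Real.log (f v) + a * v ^ 2 * f v + K * f v) := by
    apply Integrable.add
    apply hflog.add
    · have := hf2.const_mul a
      simpa [mul_assoc] using this
    · exact hfi.const_mul K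
  have := integral_mono (hfi.sub hρi) hgi hpt
  simp only [Pi.sub_apply] at this
  rw [integral_sub hfi hρi, hf1, hρ1] at this
  have hai : Integrable (fun v => a * (v ^ 2 * f v)) := hf2.const_mul a
  have h2 : (∫ v, f v * Real.log (f v) + a * v ^ 2 * f v + K * f v)
      = (∫ v, f v * Real.log (f v)) + a * (∫ v, v ^ 2 * f v) + K := by
    calc (∫ v, f v * Real.log (f v) + a * v ^ 2 * f v + K * f v)
        = ∫ v, (f v * Real.log (f v) + a * (v ^ 2 * f v)) + K * f v := by
          congr 1; ext v; ring
      _ = (∫ v, f v * Real.log (f v) + a * (v ^ 2 * f v)) + ∫ v, K * f v :=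
          integral_add (hflog.add hai) (hfi.const_mul K)
      _ = ((∫ v, f v * Real.log (f v)) + ∫ v, a * (v ^ 2 * f v)) + ∫ v, K * f v :=
          by rw [integral_add hflog hai]
      _ = (∫ v, f v * Real.log (f v)) + a * (∫ v, v ^ 2 * f v) + K := by
          rw [integral_const_mul, integral_const_mul, hf1, mul_one]
  rw [h2] at this
  linarith

/-- The free-energy functional S(f) = ∫ (f log f + v²/(2σ) f) + V(⟨w⟩_f)/σ is
bounded from below on probability densities with finite second moment. -/
theorem stmt7 (σ : ℝ) (hσ : 0 < σ) (G V : ℝ → ℝ) (hGc : Continuous G)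
    (hGb : ∃ Bd : ℝ, ∀ u, |G u| ≤ Bd) (hV : ∀ u, HasDerivAt V (-G u) u) :
    ∃ L : ℝ, ∀ f : ℝ → ℝ, (∀ v, 0 ≤ f v) → Integrable f → (∫ v, f v) = 1 →
      Integrable (fun v => v * f v) → Integrable (fun v => v^2 * f v) →
      Integrable (fun v => f v * Real.log (f v)) →
      L ≤ (∫ v, (f v * Real.log (f v) + v^2 / (2*σ) * f v))
            + V (∫ w, w * f w) / σ := by
  obtain ⟨Bd, hBd⟩ := hGb
  have hBd0 : 0 ≤ Bd := le_trans (abs_nonneg _) (hBd 0)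
  set a : ℝ := 1 / (8 * σ) with ha_def
  have ha : 0 < a := by positivity
  set ε : ℝ := 1 / (4 * (Bd + 1)) with hε_def
  have hε : 0 < ε := by positivity
  set K : ℝ := Real.log (Real.sqrt (π / a)) with hK_def
  refine ⟨-K + V 0 / σ - (Bd / (2 * ε)) / σ, ?_⟩
  intro f hf0 hfi hf1 hfw hf2 hflog
  set m : ℝ := ∫ w, w * f w with hm_def
  set M2 : ℝ := ∫ v, v ^ 2 * f v with hM2_def
  set E : ℝ := ∫ v, f v * Real.log (f v) with hE_def
  have hM2 : 0 ≤ M2 := integral_nonneg fun v => mul_nonneg (sq_nonneg v) (hf0 v)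
  -- entropy bound
  have hE : -(a * M2) - K ≤ E := entropy_lb a ha f hf0 hfi hf1 hf2 hflog
  -- V bound
  have hVb : V 0 - Bd * |m| ≤ V m := by
    have h := Convex.norm_image_sub_le_of_norm_hasDerivWithin_le
      (f := V) (f' := fun u => -G u) (s := Set.univ) (C := Bd)
      (fun x _ => (hV x).hasDerivWithinAt) (fun x _ => by simpa using hBd x)
      convex_univ (Set.mem_univ 0) (Set.mem_univ m)
    rw [Real.norm_eq_abs, Real.norm_eq_abs, sub_zero] at h
    have := abs_le.mp h
    linarith [this.1]
  -- mean bound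
  have hmb : |m| ≤ ε / 2 * M2 + 1 / (2 * ε) := by
    have h1 : |m| ≤ ∫ w, |w * f w| := by
      calc |m| ≤ ‖∫ w, w * f w‖ := le_of_eq (Real.norm_eq_abs _).symm
        _ ≤ ∫ w, ‖w * f w‖ := norm_integral_le_integral_norm _
        _ = ∫ w, |w * f w| := by simp only [Real.norm_eq_abs]
    have hrhs : Integrable (fun w => ε / 2 * (w ^ 2 * f w) + 1 / (2 * ε) * f w) :=
      (hf2.const_mul _).add (hfi.const_mul _)
    have h2 : (∫ w, |w * f w|) ≤ ∫ w, ε / 2 * (w ^ 2 * f w) + 1 / (2 * ε) * f w := by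
      apply integral_mono hfw.abs hrhs
      intro w
      show |w * f w| ≤ ε / 2 * (w ^ 2 * f w) + 1 / (2 * ε) * f w
      rw [abs_mul, abs_of_nonneg (hf0 w)]
      have key : |w| ≤ ε / 2 * w ^ 2 + 1 / (2 * ε) := by
        have h8 : 2 * ε * |w| ≤ ε ^ 2 * w ^ 2 + 1 := by
          nlinarith [sq_nonneg (ε * |w| - 1), sq_abs w]
        rw [← sub_nonneg]
        have h9 : ε / 2 * w ^ 2 + 1 / (2 * ε) - |w|
            = (ε ^ 2 * w ^ 2 + 1 - 2 * ε * |w|) / (2 * ε) := by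
          field_simp
        rw [h9]
        exact div_nonneg (by linarith) (by positivity)
      nlinarith [hf0 w, abs_nonneg w]
    have h3 : (∫ w, ε / 2 * (w ^ 2 * f w) + 1 / (2 * ε) * f w)
        = ε / 2 * M2 + 1 / (2 * ε) := by
      rw [integral_add (hf2.const_mul _) (hfi.const_mul _), integral_const_mul,
        integral_const_mul, hf1, mul_one]
    linarith [h1, h2, h3.le, h3.ge]
  -- combine
  have h5 : Bd * |m| ≤ M2 / 8 + Bd / (2 * ε) := by
    have h6 := mul_le_mul_of_nonneg_left hmb hBd0
    have hB1 : (0:ℝ) < Bd + 1 := by linarith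
    have hBe : Bd * (ε / 2) ≤ 1 / 8 := by
      rw [hε_def]
      have heq : Bd * (1 / (4 * (Bd + 1)) / 2) = Bd / (8 * (Bd + 1)) := by
        rw [div_div, mul_one_div]; congr 1; ring
      rw [heq, div_le_div_iff₀ (by positivity) (by norm_num)]
      nlinarith
    have hx : Bd * (ε / 2 * M2 + 1 / (2 * ε)) = Bd * (ε / 2) * M2 + Bd / (2 * ε) := by
      field_simp
    rw [hx] at h6
    linarith [mul_le_mul_of_nonneg_right hBe hM2]
  have hsplit : (∫ v, (f v * Real.log (f v) + v ^ 2 / (2 * σ) * f v))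
      = E + (1 / (2 * σ)) * M2 := by
    have hc : Integrable (fun v => 1 / (2 * σ) * (v ^ 2 * f v)) := hf2.const_mul _
    calc (∫ v, (f v * Real.log (f v) + v ^ 2 / (2 * σ) * f v))
        = ∫ v, f v * Real.log (f v) + 1 / (2 * σ) * (v ^ 2 * f v) := by
          congr 1; ext v; ring
      _ = E + ∫ v, 1 / (2 * σ) * (v ^ 2 * f v) := integral_add hflog hc
      _ = E + (1 / (2 * σ)) * M2 := by rw [integral_const_mul]
  rw [hsplit]
  have hV2 : (V 0 - Bd * |m|) / σ ≤ V m / σ := by gcongr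
  have hV3 : (V 0 - (M2 / 8 + Bd / (2 * ε))) / σ ≤ (V 0 - Bd * |m|) / σ := by gcongr
  have hexp : (V 0 - (M2 / 8 + Bd / (2 * ε))) / σ
      = V 0 / σ - (1 / (8 * σ)) * M2 - (Bd / (2 * ε)) / σ := by
    field_simp; ring
  rw [hexp] at hV3
  have hM2σ : 0 ≤ (1 / (8 * σ)) * M2 := by positivity
  have haM : a * M2 = (1 / (8 * σ)) * M2 := by rw [ha_def]
  have hhalf : (1 / (2 * σ)) * M2 = 4 * ((1 / (8 * σ)) * M2) := by
    field_simp; ring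
  linarith [hE, hV2, hV3]
end

section
/- Let f and g be probability densities on ℝ with finite first moments and let φ: 𝕋 → ℝ be continuous with φ ≥ ε > 0 and ∫_𝕋 φ = 1. Define M_f(x) = (∫∫ f(y,w) φ(x-y) w dy dw)/(∫∫ f(y,w) φ(x-y) dy dw) for densities f(y,w) on 𝕋 × ℝ with mass 1, and similarly M_g. Then |M_f(x) - M_g(x)| ≤ C (‖(f-g)√(1+w²)‖_{L¹} + ‖f-g‖_{L¹}) for a constant C depending only on ε, ‖φ‖_∞, and the first moment of g. -/
/-!
With `a = ⟨1⟩` and `b = ⟨w⟩`, write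
`b_f / a_f - b_g / a_g = (b_f - b_g) / a_f + b_g (a_g - a_f) / (a_f a_g)`.
Since `φ ≥ ε` and the densities have mass one, both denominators are at least `ε`.
A continuous periodic `φ` is bounded by some `K`, so `|b_f - b_g|` and `|a_f - a_g|` are at most
`K` times weighted `L¹` distances of `f` and `g`, and `|b_g|` is at most `K` times the first
moment of `g`; finally `|w| ≤ √(1 + w²)`.
-/

open MeasureTheory

lemma abs_div_sub_div_le_of_le {ε a b c d : ℝ} (hε : 0 < ε) (ha : ε ≤ a) (hc : ε ≤ c) :
    |b / a - d / c| ≤ |b - d| / ε + |d| * |a - c| / ε ^ 2 := by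
  have ha0 : 0 < a := hε.trans_le ha
  have hc0 : 0 < c := hε.trans_le hc
  have hsplit : b / a - d / c = (b - d) / a + d * (c - a) / (a * c) := by
    field_simp
    ring
  calc |b / a - d / c| ≤ |b - d| / a + |d| * |a - c| / (a * c) := by
        rw [hsplit]
        refine (abs_add_le _ _).trans_eq ?_
        rw [abs_div, abs_div, abs_mul, abs_of_pos ha0, abs_of_pos (mul_pos ha0 hc0),
          abs_sub_comm c a]
    _ ≤ |b - d| / ε + |d| * |a - c| / (ε * ε) := by gcongr
    _ = |b - d| / ε + |d| * |a - c| / ε ^ 2 := by rw [sq]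

lemma Real.sqrt_one_add_sq_le (w : ℝ) : √(1 + w ^ 2) ≤ 1 + |w| :=
  (Real.sqrt_le_left (by positivity)).2 (by nlinarith [sq_abs w, abs_nonneg w])

section WeightedMean

variable {α : Type*} [MeasurableSpace α] {μ : Measure α} {ψ v f g : α → ℝ} {ε K : ℝ}

lemma abs_integral_le_mul_integral {F G : α → ℝ} (hG : Integrable G μ)
    (h : ∀ a, |F a| ≤ K * G a) : |∫ a, F a ∂μ| ≤ K * ∫ a, G a ∂μ := by
  rw [← integral_const_mul, ← Real.norm_eq_abs]
  exact norm_integral_le_of_norm_le (hG.const_mul K) (ae_of_all _ h)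

lemma le_integral_mul_of_le (hψε : ∀ a, ε ≤ ψ a) (hf0 : ∀ a, 0 ≤ f a) (hf : Integrable f μ)
    (hfψ : Integrable (fun a => f a * ψ a) μ) :
    ε * ∫ a, f a ∂μ ≤ ∫ a, f a * ψ a ∂μ := by
  rw [← integral_const_mul]
  exact integral_mono (hf.const_mul ε) hfψ fun a => by
    rw [mul_comm]; exact mul_le_mul_of_nonneg_left (hψε a) (hf0 a)

lemma integrable_mul_of_integrable_abs_mul (hvm : AEStronglyMeasurable v μ)
    (hf0 : ∀ a, 0 ≤ f a) (hf : Integrable f μ) (hfv : Integrable (fun a => |v a| * f a) μ) :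
    Integrable (fun a => f a * v a) μ :=
  hfv.mono' (hf.aestronglyMeasurable.mul hvm) <| ae_of_all _ fun a => by
    rw [Real.norm_eq_abs, abs_mul, abs_of_nonneg (hf0 a), mul_comm]

lemma integrable_mul_mul_of_integrable_abs_mul (hψm : AEStronglyMeasurable ψ μ)
    (hψ : ∀ᵐ a ∂μ, ‖ψ a‖ ≤ K) (hvm : AEStronglyMeasurable v μ) (hf0 : ∀ a, 0 ≤ f a)
    (hf : Integrable f μ) (hfv : Integrable (fun a => |v a| * f a) μ) :
    Integrable (fun a => f a * ψ a * v a) μ :=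
  ((integrable_mul_of_integrable_abs_mul hvm hf0 hf hfv).mul_bdd hψm hψ).congr
    (ae_of_all _ fun _ => mul_right_comm _ _ _)

lemma integrable_abs_sub_mul_sqrt (hvm : AEStronglyMeasurable v μ)
    (hf0 : ∀ a, 0 ≤ f a) (hf : Integrable f μ) (hfv : Integrable (fun a => |v a| * f a) μ)
    (hg0 : ∀ a, 0 ≤ g a) (hg : Integrable g μ) (hgv : Integrable (fun a => |v a| * g a) μ) :
    Integrable (fun a => |f a - g a| * √(1 + v a ^ 2)) μ := by
  refine ((hf.add hg).add (hfv.add hgv)).mono'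
    ((hf.sub hg).abs.aestronglyMeasurable.mul
      (((hvm.aemeasurable.pow_const 2).const_add 1).sqrt.aestronglyMeasurable)) ?_
  refine ae_of_all _ fun a => ?_
  have hfg : |f a - g a| ≤ f a + g a := by
    rw [abs_le]; constructor <;> linarith [hf0 a, hg0 a]
  calc ‖|f a - g a| * √(1 + v a ^ 2)‖ = |f a - g a| * √(1 + v a ^ 2) := by
        rw [Real.norm_eq_abs, abs_of_nonneg (by positivity)]
    _ ≤ (f a + g a) * (1 + |v a|) := by
        gcongr
        · linarith [hf0 a, hg0 a]
        · exact Real.sqrt_one_add_sq_le _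
    _ = f a + g a + (|v a| * f a + |v a| * g a) := by ring

theorem abs_div_sub_div_integral_mul_le (hε : 0 < ε) (hψm : AEStronglyMeasurable ψ μ)
    (hψε : ∀ a, ε ≤ ψ a) (hψK : ∀ a, ψ a ≤ K) (hvm : AEStronglyMeasurable v μ)
    (hf0 : ∀ a, 0 ≤ f a) (hf : Integrable f μ) (hfv : Integrable (fun a => |v a| * f a) μ)
    (hf1 : ∫ a, f a ∂μ = 1)
    (hg0 : ∀ a, 0 ≤ g a) (hg : Integrable g μ) (hgv : Integrable (fun a => |v a| * g a) μ)
    (hg1 : ∫ a, g a ∂μ = 1) :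
    |(∫ a, f a * ψ a * v a ∂μ) / (∫ a, f a * ψ a ∂μ)
        - (∫ a, g a * ψ a * v a ∂μ) / (∫ a, g a * ψ a ∂μ)|
      ≤ K / ε * ∫ a, |f a - g a| * |v a| ∂μ
        + K ^ 2 * (∫ a, |v a| * g a ∂μ) / ε ^ 2 * ∫ a, |f a - g a| ∂μ := by
  have hψ0 : ∀ a, 0 ≤ ψ a := fun a => hε.le.trans (hψε a)
  have hψbdd : ∀ᵐ a ∂μ, ‖ψ a‖ ≤ K := ae_of_all _ fun a => by
    rw [Real.norm_eq_abs, abs_of_nonneg (hψ0 a)]; exact hψK a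
  have hfψ : Integrable (fun a => f a * ψ a) μ := hf.mul_bdd hψm hψbdd
  have hgψ : Integrable (fun a => g a * ψ a) μ := hg.mul_bdd hψm hψbdd
  have hfψv := integrable_mul_mul_of_integrable_abs_mul hψm hψbdd hvm hf0 hf hfv
  have hgψv := integrable_mul_mul_of_integrable_abs_mul hψm hψbdd hvm hg0 hg hgv
  have hfgv : Integrable (fun a => |f a - g a| * |v a|) μ :=
    ((integrable_mul_of_integrable_abs_mul hvm hf0 hf hfv).sub
      (integrable_mul_of_integrable_abs_mul hvm hg0 hg hgv)).abs.congr
      (ae_of_all _ fun a => by simp only [Pi.sub_apply, ← sub_mul, abs_mul])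
  have hmean_f : ε ≤ ∫ a, f a * ψ a ∂μ := by
    simpa only [hf1, mul_one] using le_integral_mul_of_le hψε hf0 hf hfψ
  have hmean_g : ε ≤ ∫ a, g a * ψ a ∂μ := by
    simpa only [hg1, mul_one] using le_integral_mul_of_le hψε hg0 hg hgψ
  have hnum : |∫ a, f a * ψ a * v a ∂μ - ∫ a, g a * ψ a * v a ∂μ|
      ≤ K * ∫ a, |f a - g a| * |v a| ∂μ := by
    rw [← integral_sub hfψv hgψv]
    refine abs_integral_le_mul_integral hfgv fun a => ?_
    calc |f a * ψ a * v a - g a * ψ a * v a| = ψ a * (|f a - g a| * |v a|) := by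
          rw [← sub_mul, ← sub_mul, abs_mul, abs_mul, abs_of_nonneg (hψ0 a)]; ring
      _ ≤ K * (|f a - g a| * |v a|) := by gcongr; exact hψK a
  have hden : |∫ a, f a * ψ a ∂μ - ∫ a, g a * ψ a ∂μ| ≤ K * ∫ a, |f a - g a| ∂μ := by
    rw [← integral_sub hfψ hgψ]
    refine abs_integral_le_mul_integral (hf.sub hg).abs fun a => ?_
    calc |f a * ψ a - g a * ψ a| = ψ a * |f a - g a| := by
          rw [← sub_mul, abs_mul, abs_of_nonneg (hψ0 a), mul_comm]
      _ ≤ K * |f a - g a| := by gcongr; exact hψK a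
  have hnum_g : |∫ a, g a * ψ a * v a ∂μ| ≤ K * ∫ a, |v a| * g a ∂μ := by
    refine abs_integral_le_mul_integral hgv fun a => ?_
    calc |g a * ψ a * v a| = ψ a * (|v a| * g a) := by
          rw [abs_mul, abs_mul, abs_of_nonneg (hψ0 a), abs_of_nonneg (hg0 a)]; ring
      _ ≤ K * (|v a| * g a) :=
          mul_le_mul_of_nonneg_right (hψK a) (mul_nonneg (abs_nonneg _) (hg0 a))
  calc _ ≤ _ := abs_div_sub_div_le_of_le hε hmean_f hmean_g
    _ ≤ K * (∫ a, |f a - g a| * |v a| ∂μ) / ε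
          + (K * ∫ a, |v a| * g a ∂μ) * (K * ∫ a, |f a - g a| ∂μ) / ε ^ 2 := by
        gcongr ?_ / ε + ?_ / ε ^ 2
        exact mul_le_mul hnum_g hden (abs_nonneg _) ((abs_nonneg _).trans hnum_g)
    _ = _ := by ring

end WeightedMean

theorem stmt14_general (ε : ℝ) (hε : 0 < ε) (φ : ℝ → ℝ) (hφc : Continuous φ)
    (hφper : ∀ x, φ (x+1) = φ x) (hφε : ∀ x, ε ≤ φ x)
    (g : ℝ × ℝ → ℝ) (hg0 : ∀ p, 0 ≤ g p)
    (hgi : IntegrableOn g (Set.Ioc (0:ℝ) 1 ×ˢ Set.univ))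
    (hgm : IntegrableOn (fun p => |p.2| * g p) (Set.Ioc (0:ℝ) 1 ×ˢ Set.univ))
    (hgnorm : ∫ p in Set.Ioc (0:ℝ) 1 ×ˢ Set.univ, g p = 1) :
    ∃ C : ℝ, 0 < C ∧ ∀ f : ℝ × ℝ → ℝ, (∀ p, 0 ≤ f p) →
      IntegrableOn f (Set.Ioc (0:ℝ) 1 ×ˢ Set.univ) →
      IntegrableOn (fun p => |p.2| * f p) (Set.Ioc (0:ℝ) 1 ×ˢ Set.univ) →
      (∫ p in Set.Ioc (0:ℝ) 1 ×ˢ Set.univ, f p) = 1 →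
      ∀ x : ℝ,
        |(∫ p in Set.Ioc (0:ℝ) 1 ×ˢ Set.univ, f p * φ (x - p.1) * p.2)
            / (∫ p in Set.Ioc (0:ℝ) 1 ×ˢ Set.univ, f p * φ (x - p.1))
          - (∫ p in Set.Ioc (0:ℝ) 1 ×ˢ Set.univ, g p * φ (x - p.1) * p.2)
            / (∫ p in Set.Ioc (0:ℝ) 1 ×ˢ Set.univ, g p * φ (x - p.1))|
        ≤ C * ((∫ p in Set.Ioc (0:ℝ) 1 ×ˢ Set.univ,
                  |f p - g p| * Real.sqrt (1 + p.2^2))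
               + ∫ p in Set.Ioc (0:ℝ) 1 ×ˢ Set.univ, |f p - g p|) := by
  set s : Set (ℝ × ℝ) := Set.Ioc (0:ℝ) 1 ×ˢ Set.univ
  obtain ⟨K, hK⟩ := (Function.Periodic.compact_of_continuous hφper one_ne_zero hφc).bddAbove
  have hφK : ∀ y, φ y ≤ K := fun y => hK ⟨y, rfl⟩
  have hK0 : 0 < K := hε.trans_le ((hφε 0).trans (hφK 0))
  have hM0 : 0 ≤ ∫ p in s, |p.2| * g p :=
    setIntegral_nonneg (measurableSet_Ioc.prod MeasurableSet.univ)
      fun p _ => mul_nonneg (abs_nonneg _) (hg0 p)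
  refine ⟨K / ε + K ^ 2 * (∫ p in s, |p.2| * g p) / ε ^ 2 + 1, by positivity,
    fun f hf0 hfi hfm hfnorm x => ?_⟩
  have hvm : AEStronglyMeasurable (fun p : ℝ × ℝ => p.2) (volume.restrict s) :=
    continuous_snd.aestronglyMeasurable
  have hmean := abs_div_sub_div_integral_mul_le (ψ := fun p : ℝ × ℝ => φ (x - p.1)) hε
    (hφc.comp (continuous_const.sub continuous_fst)).aestronglyMeasurable
    (fun p => hφε _) (fun p => hφK _) hvm hf0 hfi hfm hfnorm hg0 hgi hgm hgnorm
  have hmoment : ∫ p in s, |f p - g p| * |p.2| ≤ ∫ p in s, |f p - g p| * √(1 + p.2 ^ 2) :=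
    integral_mono_of_nonneg (ae_of_all _ fun p => by positivity)
      (integrable_abs_sub_mul_sqrt hvm hf0 hfi hfm hg0 hgi hgm)
      (ae_of_all _ fun p => mul_le_mul_of_nonneg_left
        (Real.abs_le_sqrt (by linarith)) (abs_nonneg _))
  have hdist_sqrt : 0 ≤ ∫ p in s, |f p - g p| * √(1 + p.2 ^ 2) :=
    integral_nonneg fun p => by positivity
  have hdist : 0 ≤ ∫ p in s, |f p - g p| := integral_nonneg fun p => abs_nonneg _
  refine hmean.trans ?_
  calc _ ≤ K / ε * (∫ p in s, |f p - g p| * √(1 + p.2 ^ 2))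
        + K ^ 2 * (∫ p in s, |p.2| * g p) / ε ^ 2 * ∫ p in s, |f p - g p| := by
          gcongr
    _ ≤ _ := by
        have hc₁ : 0 ≤ K / ε := by positivity
        have hc₂ : 0 ≤ K ^ 2 * (∫ p in s, |p.2| * g p) / ε ^ 2 := by positivity
        nlinarith [mul_nonneg hc₁ hdist, mul_nonneg hc₂ hdist_sqrt]

/-- Lipschitz-type estimate for the weighted local mean velocity M_f in terms of
weighted L¹ distances of the densities. The torus 𝕋 is represented by
1-periodic functions in x, with densities supported on the strip (0,1] × ℝ. -/
theorem stmt14 (ε : ℝ) (hε : 0 < ε) (φ : ℝ → ℝ) (hφc : Continuous φ)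
    (hφper : ∀ x, φ (x+1) = φ x) (hφε : ∀ x, ε ≤ φ x)
    (hφnorm : ∫ x in (0:ℝ)..1, φ x = 1)
    (g : ℝ × ℝ → ℝ) (hg0 : ∀ p, 0 ≤ g p)
    (hgi : IntegrableOn g (Set.Ioc (0:ℝ) 1 ×ˢ Set.univ))
    (hgm : IntegrableOn (fun p => |p.2| * g p) (Set.Ioc (0:ℝ) 1 ×ˢ Set.univ))
    (hgnorm : ∫ p in Set.Ioc (0:ℝ) 1 ×ˢ Set.univ, g p = 1) :
    ∃ C : ℝ, 0 < C ∧ ∀ f : ℝ × ℝ → ℝ, (∀ p, 0 ≤ f p) →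
      IntegrableOn f (Set.Ioc (0:ℝ) 1 ×ˢ Set.univ) →
      IntegrableOn (fun p => |p.2| * f p) (Set.Ioc (0:ℝ) 1 ×ˢ Set.univ) →
      (∫ p in Set.Ioc (0:ℝ) 1 ×ˢ Set.univ, f p) = 1 →
      ∀ x : ℝ,
        |(∫ p in Set.Ioc (0:ℝ) 1 ×ˢ Set.univ, f p * φ (x - p.1) * p.2)
            / (∫ p in Set.Ioc (0:ℝ) 1 ×ˢ Set.univ, f p * φ (x - p.1))
          - (∫ p in Set.Ioc (0:ℝ) 1 ×ˢ Set.univ, g p * φ (x - p.1) * p.2)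
            / (∫ p in Set.Ioc (0:ℝ) 1 ×ˢ Set.univ, g p * φ (x - p.1))|
        ≤ C * ((∫ p in Set.Ioc (0:ℝ) 1 ×ˢ Set.univ,
                  |f p - g p| * Real.sqrt (1 + p.2^2))
               + ∫ p in Set.Ioc (0:ℝ) 1 ×ˢ Set.univ, |f p - g p|) :=
  stmt14_general ε hε φ hφc hφper hφε g hg0 hgi hgm hgnorm
end

section
/- Suppose A = A(t,x) and B = B(t,x) are smooth with B > 0, and the density f_t(x,v) = Z_t^{-1} exp(-(v-A)²/(2B)), Z_t = ∫_𝕋 √(2πB(t,x)) dx, solves the kinetic equation ∂_t f = -v∂_x f - ∂_v[(G(M)-v) f] + σ ∂_{vv} f with M(t,x) defined by the φ-weighted conditional mean. Then necessarily ∂_x B = 0, ∂_x A = 0, B solves ∂_t B = 2(σ - B) (so B(t) = e^{-2t}B(0) + σ(1-e^{-2t}) → σ), and A solves A' = G(A) - A. -/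
open Real MeasureTheory Filter Topology intervalIntegral

lemma gauss0 {b : ℝ} (hb : 0 < b) :
    ∫ v : ℝ, Real.exp (-v^2 / (2*b)) = Real.sqrt (2*Real.pi*b) := by
  have h : ∀ v : ℝ, Real.exp (-v^2 / (2*b)) = Real.exp (-(1/(2*b)) * v^2) := by
    intro v; ring_nf
  simp_rw [h]
  rw [integral_gaussian]
  congr 1; field_simp

lemma gauss1 (a : ℝ) {b : ℝ} (hb : 0 < b) :
    ∫ v : ℝ, Real.exp (-(v-a)^2 / (2*b)) = Real.sqrt (2*Real.pi*b) := by
  rw [integral_sub_right_eq_self (μ := volume) (fun u => Real.exp (-u^2 / (2*b))) a]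
  exact gauss0 hb

lemma gaussodd {b : ℝ} (hb : 0 < b) :
    ∫ v : ℝ, Real.exp (-v^2 / (2*b)) * v = 0 := by
  have h := integral_neg_eq_self (fun v : ℝ => Real.exp (-v^2 / (2*b)) * v) volume
  simp only [neg_sq, mul_neg] at h
  have : ∫ v : ℝ, Real.exp (-v^2 / (2*b)) * v
      = - ∫ v : ℝ, Real.exp (-v^2 / (2*b)) * v := by
    nth_rewrite 1 [← h]; rw [MeasureTheory.integral_neg]
  linarith

lemma gauss_int1 {b : ℝ} (hb : 0 < b) :
    Integrable (fun v : ℝ => Real.exp (-v^2 / (2*b))) := by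
  have h : ∀ v : ℝ, Real.exp (-v^2 / (2*b)) = Real.exp (-(1/(2*b)) * v^2) := by
    intro v; ring_nf
  simp_rw [h]
  exact integrable_exp_neg_mul_sq (by positivity)

lemma gauss_int2 {b : ℝ} (hb : 0 < b) :
    Integrable (fun v : ℝ => Real.exp (-v^2 / (2*b)) * v) := by
  have h : ∀ v : ℝ, Real.exp (-v^2 / (2*b)) * v = v * Real.exp (-(1/(2*b)) * v^2) := by
    intro v; ring_nf
  simp_rw [h]
  exact integrable_mul_exp_neg_mul_sq (by positivity)

lemma gauss2 (a : ℝ) {b : ℝ} (hb : 0 < b) :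
    ∫ v : ℝ, Real.exp (-(v-a)^2 / (2*b)) * v = a * Real.sqrt (2*Real.pi*b) := by
  have key := integral_sub_right_eq_self (μ := volume)
    (fun u => Real.exp (-u^2 / (2*b)) * (u + a)) a
  have h1 : ∀ v : ℝ, Real.exp (-(v-a)^2 / (2*b)) * ((v-a) + a)
      = Real.exp (-(v-a)^2 / (2*b)) * v := by intro v; ring_nf
  simp_rw [h1] at key
  rw [key]
  rw [show (fun u : ℝ => Real.exp (-u^2 / (2*b)) * (u + a))
      = (fun u : ℝ => Real.exp (-u^2 / (2*b)) * u + a * Real.exp (-u^2 / (2*b))) by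
    funext u; ring]
  rw [integral_add (gauss_int2 hb) ((gauss_int1 hb).const_mul a)]
  rw [gaussodd hb, MeasureTheory.integral_const_mul, gauss0 hb]
  ring

lemma poly_zero {c0 c1 c2 c3 : ℝ} (h : ∀ u : ℝ, c0 + c1*u + c2*u^2 + c3*u^3 = 0) :
    c0 = 0 ∧ c1 = 0 ∧ c2 = 0 ∧ c3 = 0 := by
  have h0 := h 0; have h1 := h 1; have h2 := h (-1); have h3 := h 2
  norm_num at h0 h1 h2 h3
  refine ⟨by linarith, by linarith, by linarith, by linarith⟩

lemma ode_sol {σ : ℝ} {g : ℝ → ℝ} (hg : ∀ t, HasDerivAt g (2*(σ - g t)) t) :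
    ∀ t, g t = Real.exp (-2*t) * g 0 + σ * (1 - Real.exp (-2*t)) := by
  intro t
  set F : ℝ → ℝ := fun s => Real.exp (2*s) * (g s - σ) with hF
  have hF' : ∀ s, HasDerivAt F 0 s := by
    intro s
    have h1 : HasDerivAt (fun s : ℝ => Real.exp (2*s)) (2 * Real.exp (2*s)) s := by
      simpa [mul_comm] using (HasDerivAt.exp ((hasDerivAt_id s).const_mul 2))
    have h2 : HasDerivAt (fun s => g s - σ) (2*(σ - g s)) s := (hg s).sub_const σ
    have := h1.mul h2
    exact this.congr_deriv (by ring)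
  have hconst : F t = F 0 := by
    apply is_const_of_deriv_eq_zero (fun s => (hF' s).differentiableAt)
    intro s; exact (hF' s).deriv
  simp only [hF] at hconst
  have he : Real.exp (2*t) ≠ 0 := Real.exp_ne_zero _
  have he2 : Real.exp (-2*t) * Real.exp (2*t) = 1 := by
    rw [← Real.exp_add]; norm_num
  norm_num at hconst
  have : Real.exp (-2*t) * (Real.exp (2*t) * (g t - σ)) = Real.exp (-2*t) * (g 0 - σ) := by
    rw [hconst]
  rw [← mul_assoc, he2, one_mul] at this
  linarith


lemma hasDerivAt_gauss (A B : ℝ → ℝ) (a' b' : ℝ) (x v : ℝ)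
    (hA : HasDerivAt A a' x) (hB : HasDerivAt B b' x) (hb : 0 < B x) :
    HasDerivAt (fun y => Real.exp (-(v - A y)^2 / (2 * B y)))
      (Real.exp (-(v - A x)^2 / (2 * B x))
        * ((v - A x)*a'/(B x) + (v - A x)^2*b'/(2*(B x)^2))) x := by
  have h1 : HasDerivAt (fun y => v - A y) (-a') x := hA.const_sub v
  have hN : HasDerivAt (fun y => -(v - A y)^2) (2*(v - A x)*a') x := by
    have h2 := (h1.pow 2).neg
    exact h2.congr_deriv (by push_cast; ring)
  have hD : HasDerivAt (fun y => 2 * B y) (2*b') x := hB.const_mul 2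
  have hq := hN.div hD (by positivity)
  have he := hq.exp
  have hbne : B x ≠ 0 := ne_of_gt hb
  exact he.congr_deriv (by simp only [Pi.div_apply]; field_simp; ring)

lemma hasDerivAt_gauss_v (a b v : ℝ) (hb : 0 < b) :
    HasDerivAt (fun w => Real.exp (-(w - a)^2/(2*b)))
      (Real.exp (-(v-a)^2/(2*b)) * (-(v-a)/b)) v := by
  have h1 : HasDerivAt (fun w => w - a) 1 v := (hasDerivAt_id v).sub_const a
  have hN : HasDerivAt (fun w => -(w - a)^2 / (2*b)) (-(v-a)*2/(2*b)) v := by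
    have h2 := ((h1.pow 2).neg).div_const (2*b)
    exact h2.congr_deriv (by push_cast; ring)
  have := hN.exp
  convert this using 1
  have : b ≠ 0 := ne_of_gt hb
  field_simp

lemma keyeq (σ g : ℝ) (A B : ℝ → ℝ → ℝ) (Z : ℝ → ℝ) (f : ℝ → ℝ → ℝ → ℝ) (t x : ℝ)
    (hAx : Differentiable ℝ (fun y => A t y)) (hAt : Differentiable ℝ (fun s => A s x))
    (hBx : Differentiable ℝ (fun y => B t y)) (hBt : Differentiable ℝ (fun s => B s x))
    (hBpos : ∀ s y, 0 < B s y)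
    (hZpos : ∀ s, 0 < Z s)
    (hf : ∀ s y v, f s y v = (Z s)⁻¹ * Real.exp (-(v - A s y)^2 / (2 * B s y)))
    (hpde : ∀ v, HasDerivAt (fun s => f s x v)
        (-(v * deriv (fun y => f t y v) x) - deriv (fun w => (g - w) * f t x w) v
          + σ * deriv (deriv (fun w => f t x w)) v) t) :
    deriv (fun y => B t y) x = 0 ∧
    deriv (fun s => B s x) t = 2*σ - 2*B t x - 2*(B t x)*(deriv (fun y => A t y) x)
        - (A t x)*(deriv (fun y => B t y) x) ∧
    deriv (fun s => A s x) t = g - A t x - (A t x)*(deriv (fun y => A t y) x) := by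
  set a := A t x with ha
  set b := B t x with hbdef
  set ax := deriv (fun y => A t y) x with hax
  set bx := deriv (fun y => B t y) x with hbx
  set at' := deriv (fun s => A s x) t with hat'
  set bt := deriv (fun s => B s x) t with hbt
  set zi := (Z t)⁻¹ with hzi
  have hb : 0 < b := hBpos t x
  have hbne : b ≠ 0 := ne_of_gt hb
  have hZne : Z t ≠ 0 := ne_of_gt (hZpos t)
  have hzine : zi ≠ 0 := inv_ne_zero hZne
  have hAxd : HasDerivAt (fun y => A t y) ax x := (hAx x).hasDerivAt
  have hBxd : HasDerivAt (fun y => B t y) bx x := (hBx x).hasDerivAt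
  have hAtd : HasDerivAt (fun s => A s x) at' t := (hAt t).hasDerivAt
  have hBtd : HasDerivAt (fun s => B s x) bt t := (hBt t).hasDerivAt
  -- x-derivative of f
  have hfx : ∀ v, HasDerivAt (fun y => f t y v)
      (zi * (Real.exp (-(v - a)^2/(2*b)) * ((v-a)*ax/b + (v-a)^2*bx/(2*b^2)))) x := by
    intro v
    have h := (hasDerivAt_gauss (fun y => A t y) (fun y => B t y) ax bx x v
      hAxd hBxd hb).const_mul zi
    have heq : (fun y => f t y v) = fun y => zi * Real.exp (-(v - A t y)^2 / (2 * B t y)) :=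
      funext fun y => hf t y v
    rw [heq]
    convert h using 1 <;> ring
  -- v-derivative of f (as a function of v)
  have hfv : ∀ w, HasDerivAt (fun w' => f t x w')
      (zi * (Real.exp (-(w-a)^2/(2*b)) * (-(w-a)/b))) w := by
    intro w
    have h := (hasDerivAt_gauss_v a b w hb).const_mul zi
    have heq : (fun w' => f t x w') = fun w' => zi * Real.exp (-(w' - a)^2 / (2 * b)) :=
      funext fun w' => hf t x w'
    rw [heq]
    exact h
  have hdfv : deriv (fun w => f t x w)
      = fun w => zi * (Real.exp (-(w-a)^2/(2*b)) * (-(w-a)/b)) :=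
    funext fun w => (hfv w).deriv
  -- second v-derivative
  have hfvv : ∀ v, HasDerivAt (deriv (fun w => f t x w))
      (zi * (Real.exp (-(v-a)^2/(2*b)) * ((v-a)^2/b^2 - 1/b))) v := by
    intro v
    rw [hdfv]
    have h1 := hasDerivAt_gauss_v a b v hb
    have h2 : HasDerivAt (fun w : ℝ => -(w-a)/b) (-1/b) v := by
      have := (((hasDerivAt_id v).sub_const a).neg).div_const b
      exact this.congr_deriv (by ring)
    have h3 := (h1.mul h2).const_mul zi
    exact h3.congr_deriv (by field_simp; ring)
  -- drift derivative
  have hdrift : ∀ v, HasDerivAt (fun w => (g - w) * f t x w)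
      ((-1) * (zi * Real.exp (-(v-a)^2/(2*b)))
        + (g - v) * (zi * (Real.exp (-(v-a)^2/(2*b)) * (-(v-a)/b)))) v := by
    intro v
    have h1 : HasDerivAt (fun w : ℝ => g - w) (-1) v := by
      simpa using (hasDerivAt_id v).const_sub g
    have h2 := h1.mul (hfv v)
    have heq : f t x v = zi * Real.exp (-(v-a)^2/(2*b)) := hf t x v
    rw [heq] at h2
    exact h2
  -- time derivative of the exponential factor
  have hEt : ∀ v, HasDerivAt (fun s => Real.exp (-(v - A s x)^2/(2*B s x)))
      (Real.exp (-(v-a)^2/(2*b)) * ((v-a)*at'/b + (v-a)^2*bt/(2*b^2))) t :=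
    fun v => hasDerivAt_gauss (fun s => A s x) (fun s => B s x) at' bt t v
      hAtd hBtd hb
  -- Z⁻¹ is differentiable in time
  have hZidiff : DifferentiableAt ℝ (fun s => (Z s)⁻¹) t := by
    have heq : (fun s => (Z s)⁻¹)
        = fun s => f s x a * (Real.exp (-(a - A s x)^2/(2*B s x)))⁻¹ := by
      funext s
      rw [hf s x a]
      rw [mul_assoc, mul_inv_cancel₀ (Real.exp_ne_zero _), mul_one]
    rw [heq]
    exact ((hpde a).differentiableAt).mul ((hEt a).differentiableAt.inv (Real.exp_ne_zero _))
  set c := deriv (fun s => (Z s)⁻¹) t with hc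
  have hZic : HasDerivAt (fun s => (Z s)⁻¹) c t := hZidiff.hasDerivAt
  -- master equation
  have master : ∀ v,
      c * Real.exp (-(v-a)^2/(2*b))
        + zi * (Real.exp (-(v-a)^2/(2*b)) * ((v-a)*at'/b + (v-a)^2*bt/(2*b^2)))
      = -(v * (zi * (Real.exp (-(v - a)^2/(2*b)) * ((v-a)*ax/b + (v-a)^2*bx/(2*b^2)))))
        - ((-1) * (zi * Real.exp (-(v-a)^2/(2*b)))
            + (g - v) * (zi * (Real.exp (-(v-a)^2/(2*b)) * (-(v-a)/b))))
        + σ * (zi * (Real.exp (-(v-a)^2/(2*b)) * ((v-a)^2/b^2 - 1/b))) := by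
    intro v
    have hft : HasDerivAt (fun s => f s x v)
        (c * Real.exp (-(v-a)^2/(2*b))
          + zi * (Real.exp (-(v-a)^2/(2*b)) * ((v-a)*at'/b + (v-a)^2*bt/(2*b^2)))) t := by
      have heq : (fun s => f s x v)
          = fun s => (Z s)⁻¹ * Real.exp (-(v - A s x)^2/(2*B s x)) :=
        funext fun s => hf s x v
      rw [heq]
      exact hZic.mul (hEt v)
    have huniq := hft.unique (hpde v)
    rw [(hfx v).deriv, (hdrift v).deriv, (hfvv v).deriv] at huniq
    exact huniq
  -- polynomial identity
  have poly : ∀ u : ℝ,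
      (2*b^2*c - zi*(2*b^2 - 2*σ*b))
      + (zi*(2*a*b*ax - 2*b*(g-a) + 2*b*at'))*u
      + (zi*(bt + 2*b*ax + a*bx + 2*b - 2*σ))*u^2
      + (zi*bx)*u^3 = 0 := by
    intro u
    have h := master (a + u)
    simp only [add_sub_cancel_left] at h
    have hE : Real.exp (-u^2/(2*b)) ≠ 0 := Real.exp_ne_zero _
    have h2 : ((2*b^2*c - zi*(2*b^2 - 2*σ*b))
        + (zi*(2*a*b*ax - 2*b*(g-a) + 2*b*at'))*u
        + (zi*(bt + 2*b*ax + a*bx + 2*b - 2*σ))*u^2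
        + (zi*bx)*u^3) * Real.exp (-u^2/(2*b))
        = 0 * Real.exp (-u^2/(2*b)) := by
      linear_combination (norm := (field_simp; ring1)) (2*b^2) * h
    exact mul_right_cancel₀ hE h2
  have hcoef : (zi*(2*a*b*ax - 2*b*(g-a) + 2*b*at')) = 0
      ∧ (zi*(bt + 2*b*ax + a*bx + 2*b - 2*σ)) = 0 ∧ (zi*bx) = 0 := by
    have h0 := poly 0; have h1 := poly 1; have h2 := poly (-1); have h3 := poly 2
    norm_num at h0 h1 h2 h3
    refine ⟨by linarith, by linarith, by linarith⟩
  obtain ⟨e1, e2, e3⟩ := hcoef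
  have hbx0 : bx = 0 := by
    rcases mul_eq_zero.mp e3 with h | h
    · exact absurd h hzine
    · exact h
  refine ⟨hbx0, ?_, ?_⟩
  · rcases mul_eq_zero.mp e2 with h | h
    · exact absurd h hzine
    · linarith
  · rcases mul_eq_zero.mp e1 with h | h
    · exact absurd h hzine
    · have h4 : (2*b) * (at' - (g - a - a*ax)) = 0 := by linear_combination h
      rcases mul_eq_zero.mp h4 with h5 | h5
      · exact absurd h5 (by positivity)
      · linarith
/-- If a Gaussian ansatz f_t(x,v) = Z_t⁻¹ exp(-(v-A(t,x))²/(2B(t,x))) solves the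
nonlinear kinetic equation, then A and B do not depend on x, B solves
B' = 2(σ - B) (hence B(t) = e^{-2t}B(0) + σ(1 - e^{-2t}) → σ) and A solves
A' = G(A) - A.  The torus is represented by 1-periodic functions in x. -/
theorem stmt17 (σ ε : ℝ) (hσ : 0 < σ) (hε : 0 < ε)
    (G : ℝ → ℝ) (hG : ContDiff ℝ (⊤ : ℕ∞) G) (hGb : ∃ Bd : ℝ, ∀ u, |G u| ≤ Bd)
    (φ : ℝ → ℝ) (hφ : ContDiff ℝ (⊤ : ℕ∞) φ) (hφper : ∀ x, φ (x+1) = φ x)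
    (hφε : ∀ x, ε ≤ φ x) (hφnorm : ∫ x in (0:ℝ)..1, φ x = 1)
    (A B : ℝ → ℝ → ℝ)
    (hA : ContDiff ℝ (⊤ : ℕ∞) (fun p : ℝ × ℝ => A p.1 p.2))
    (hB : ContDiff ℝ (⊤ : ℕ∞) (fun p : ℝ × ℝ => B p.1 p.2))
    (hBpos : ∀ t x, 0 < B t x)
    (hAper : ∀ t x, A t (x+1) = A t x) (hBper : ∀ t x, B t (x+1) = B t x)
    (Z : ℝ → ℝ) (hZ : ∀ t, Z t = ∫ x in (0:ℝ)..1, Real.sqrt (2 * Real.pi * B t x))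
    (f : ℝ → ℝ → ℝ → ℝ)
    (hf : ∀ t x v, f t x v = (Z t)⁻¹ * Real.exp (-(v - A t x)^2 / (2 * B t x)))
    (M : ℝ → ℝ → ℝ)
    (hM : ∀ t x, M t x
      = (∫ y in (0:ℝ)..1, ∫ v : ℝ, f t y v * φ (x - y) * v)
        / (∫ y in (0:ℝ)..1, ∫ v : ℝ, f t y v * φ (x - y)))
    (hpde : ∀ t x v, HasDerivAt (fun s => f s x v)
      (-(v * deriv (fun y => f t y v) x)
        - deriv (fun w => (G (M t x) - w) * f t x w) v
        + σ * deriv (deriv (fun w => f t x w)) v) t) :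
    (∀ t x, deriv (fun y => B t y) x = 0) ∧
    (∀ t x, deriv (fun y => A t y) x = 0) ∧
    (∀ t x, HasDerivAt (fun s => B s x) (2 * (σ - B t x)) t) ∧
    (∀ t x, 0 ≤ t →
        B t x = Real.exp (-2*t) * B 0 x + σ * (1 - Real.exp (-2*t))) ∧
    (∀ x, Tendsto (fun t => B t x) atTop (𝓝 σ)) ∧
    (∀ t x, HasDerivAt (fun s => A s x) (G (A t x) - A t x) t) := by
  -- differentiability of slices
  have hAd := hA.differentiable (by simp)
  have hBd := hB.differentiable (by simp)
  have hAxdiff : ∀ t, Differentiable ℝ (fun y => A t y) := fun t =>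
    hAd.comp ((differentiable_const t).prodMk differentiable_id)
  have hAtdiff : ∀ x, Differentiable ℝ (fun s => A s x) := fun x =>
    hAd.comp (differentiable_id.prodMk (differentiable_const x))
  have hBxdiff : ∀ t, Differentiable ℝ (fun y => B t y) := fun t =>
    hBd.comp ((differentiable_const t).prodMk differentiable_id)
  have hBtdiff : ∀ x, Differentiable ℝ (fun s => B s x) := fun x =>
    hBd.comp (differentiable_id.prodMk (differentiable_const x))
  -- positivity of Z
  have hBcont : Continuous (fun p : ℝ × ℝ => B p.1 p.2) := hB.continuous
  have hZpos : ∀ t, 0 < Z t := by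
    intro t
    rw [hZ t]
    apply intervalIntegral_pos_of_pos ?_ ?_ zero_lt_one
    · apply Continuous.intervalIntegrable
      exact (continuous_const.mul
        (hBcont.comp (continuous_const.prodMk continuous_id))).sqrt
    · intro y
      exact Real.sqrt_pos.mpr (mul_pos (by positivity) (hBpos t y))
  -- key pointwise relations
  have key := fun t x => keyeq σ (G (M t x)) A B Z f t x
    (hAxdiff t) (hAtdiff x) (hBxdiff t) (hBtdiff x) hBpos hZpos hf (hpde t x)
  have part1 : ∀ t x, deriv (fun y => B t y) x = 0 := fun t x => (key t x).1
  -- B is constant in x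
  have hBconst : ∀ t x, B t x = B t 0 := fun t x =>
    is_const_of_deriv_eq_zero (hBxdiff t) (part1 t) x 0
  have hBtc : ∀ t x, deriv (fun s => B s x) t = deriv (fun s => B s 0) t := by
    intro t x
    have : (fun s => B s x) = fun s => B s 0 := funext fun s => hBconst s x
    rw [this]
  -- A is constant in x
  have part2 : ∀ t x, deriv (fun y => A t y) x = 0 := by
    intro t x
    have haxc : ∀ y, deriv (fun y' => A t y') y = deriv (fun y' => A t y') 0 := by
      intro y
      have ey := (key t y).2.1
      have e0 := (key t 0).2.1
      rw [part1 t y] at ey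
      rw [part1 t 0] at e0
      rw [hBtc t y, hBconst t y] at ey
      have hb0 : 0 < B t 0 := hBpos t 0
      nlinarith [ey, e0]
    set k := deriv (fun y' => A t y') 0 with hk
    have hder : ∀ y, HasDerivAt (fun y' => A t y') k y := by
      intro y
      have h := ((hAxdiff t) y).hasDerivAt
      rwa [haxc y] at h
    have hFk : ∀ y, HasDerivAt (fun y' => A t y' - k * y') 0 y := by
      intro y
      have := (hder y).sub ((hasDerivAt_id y).const_mul k)
      exact this.congr_deriv (by simp)
    have hF : A t 1 - k * 1 = A t 0 - k * 0 :=
      is_const_of_deriv_eq_zero (fun y => (hFk y).differentiableAt)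
        (fun y => (hFk y).deriv) 1 0
    have hA10 : A t 1 = A t 0 := by
      have := hAper t 0
      simpa using this
    have hk0 : k = 0 := by
      rw [hA10] at hF
      linarith
    rw [haxc x]; exact hk0
  -- B solves the ODE
  have part3 : ∀ t x, HasDerivAt (fun s => B s x) (2 * (σ - B t x)) t := by
    intro t x
    have h := ((hBtdiff x) t).hasDerivAt
    have e := (key t x).2.1
    rw [part1 t x, part2 t x] at e
    rw [e] at h
    exact h.congr_deriv (by ring)
  -- explicit solution
  have part4 : ∀ t x, B t x = Real.exp (-2*t) * B 0 x + σ * (1 - Real.exp (-2*t)) := by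
    intro t x
    exact ode_sol (g := fun s => B s x) (fun s => part3 s x) t
  -- convergence
  have part5 : ∀ x, Tendsto (fun t => B t x) atTop (𝓝 σ) := by
    intro x
    have hexp : Tendsto (fun t : ℝ => Real.exp (-2*t)) atTop (𝓝 0) := by
      have heq : (fun t : ℝ => Real.exp (-2*t))
          = (fun x : ℝ => Real.exp (-x)) ∘ (fun t : ℝ => 2*t) := by
        funext t
        simp [Function.comp, neg_mul]
      rw [heq]
      exact Real.tendsto_exp_neg_atTop_nhds_zero.comp
        (tendsto_id.const_mul_atTop two_pos)
    have : Tendsto (fun t => Real.exp (-2*t) * B 0 x + σ * (1 - Real.exp (-2*t)))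
        atTop (𝓝 (0 * B 0 x + σ * (1 - 0))) :=
      (hexp.mul_const (B 0 x)).add
        (tendsto_const_nhds.mul (tendsto_const_nhds.sub hexp))
    have heq : (fun t => B t x) = fun t => Real.exp (-2*t) * B 0 x
        + σ * (1 - Real.exp (-2*t)) := funext fun t => part4 t x
    rw [heq]
    simpa using this
  -- M equals A
  have hMA : ∀ t x, M t x = A t x := by
    intro t x
    have hb := hBpos t x
    have hZt := hZpos t
    have hAc : ∀ y, A t y = A t x := by
      intro y
      have h1 : A t y = A t 0 := is_const_of_deriv_eq_zero (hAxdiff t) (part2 t) y 0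
      have h2 : A t x = A t 0 := is_const_of_deriv_eq_zero (hAxdiff t) (part2 t) x 0
      rw [h1, h2]
    have hBc : ∀ y, B t y = B t x := by
      intro y
      rw [hBconst t y, hBconst t x]
    have e1 : ∀ y, (∫ v : ℝ, f t y v * φ (x - y) * v)
        = A t x * (((Z t)⁻¹ * Real.sqrt (2*Real.pi*B t x)) * φ (x - y)) := by
      intro y
      calc (∫ v : ℝ, f t y v * φ (x - y) * v)
          = ∫ v : ℝ, ((Z t)⁻¹ * φ (x - y))
              * (Real.exp (-(v - A t x)^2/(2*B t x)) * v) := by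
            congr 1
            funext v
            rw [hf t y v, hAc y, hBc y]
            ring
        _ = ((Z t)⁻¹ * φ (x - y))
              * ∫ v : ℝ, Real.exp (-(v - A t x)^2/(2*B t x)) * v :=
            MeasureTheory.integral_const_mul _ _
        _ = _ := by rw [gauss2 _ hb]; ring
    have e2 : ∀ y, (∫ v : ℝ, f t y v * φ (x - y))
        = ((Z t)⁻¹ * Real.sqrt (2*Real.pi*B t x)) * φ (x - y) := by
      intro y
      calc (∫ v : ℝ, f t y v * φ (x - y))
          = ∫ v : ℝ, ((Z t)⁻¹ * φ (x - y))
              * Real.exp (-(v - A t x)^2/(2*B t x)) := by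
            congr 1
            funext v
            rw [hf t y v, hAc y, hBc y]
            ring
        _ = ((Z t)⁻¹ * φ (x - y))
              * ∫ v : ℝ, Real.exp (-(v - A t x)^2/(2*B t x)) :=
            MeasureTheory.integral_const_mul _ _
        _ = _ := by rw [gauss1 _ hb]; ring
    rw [hM t x]
    simp only [e1, e2]
    rw [intervalIntegral.integral_const_mul]
    have hDpos : 0 < ∫ y in (0:ℝ)..1,
        ((Z t)⁻¹ * Real.sqrt (2*Real.pi*B t x)) * φ (x - y) := by
      rw [intervalIntegral.integral_const_mul]
      apply mul_pos
      · have h2 : 0 < Real.sqrt (2*Real.pi*B t x) :=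
          Real.sqrt_pos.mpr (mul_pos (by positivity) hb)
        positivity
      · apply intervalIntegral_pos_of_pos ?_ ?_ zero_lt_one
        · exact (hφ.continuous.comp (continuous_const.sub continuous_id)).intervalIntegrable _ _
        · intro y
          exact lt_of_lt_of_le hε (hφε _)
    rw [mul_div_assoc, div_self (ne_of_gt hDpos), mul_one]
  -- A solves the ODE
  have part6 : ∀ t x, HasDerivAt (fun s => A s x) (G (A t x) - A t x) t := by
    intro t x
    have h := ((hAtdiff x) t).hasDerivAt
    have e := (key t x).2.2
    rw [part2 t x, hMA t x] at e
    have e' : deriv (fun s => A s x) t = G (A t x) - A t x := by rw [e]; ring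
    rw [e'] at h
    exact h
  exact ⟨part1, part2, part3, fun t x _ => part4 t x, part5, part6⟩
end
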